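/- Let V be a 5-dimensional real vector space with a symmetric bilinear form g of signature (-,+,+,+,+), and let T : V → V be g-self-adjoint. Then there exist two linearly independent spacelike eigenvectors of T that are g-orthogonal to each other. -/

import Mathlib

open Module Polynomial Finset

set_option linter.unusedSectionVars false
set_option maxHeartbeats 1000000

section Aux

variable {V : Type*} [AddCommGroup V] [Module ℝ V] [FiniteDimensional ℝ V]

theorem gexp (b : Basis (Fin 5) ℝ V) (g : LinearMap.BilinForm ℝ V)
    (hb : ∀ i j, g (b i) (b j) = if i = j then (if i = 0 then -1 else 1) else 0)
    (x y : V) :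
    g x y = (∑ i ∈ Finset.univ.erase (0 : Fin 5), b.repr x i * b.repr y i)
      - b.repr x 0 * b.repr y 0 := by
  have he : Finset.univ.erase (0 : Fin 5) = {1, 2, 3, 4} := by decide
  conv_lhs => rw [← b.sum_repr x, ← b.sum_repr y]
  simp only [map_sum, map_smul, LinearMap.sum_apply, LinearMap.smul_apply, smul_eq_mul, hb]
  simp only [mul_ite, mul_zero, Finset.sum_ite_eq' Finset.univ, Finset.mem_univ, if_true]
  rw [he]
  simp [Fin.sum_univ_five, Fin.isValue]
  ring

theorem gcoord (b : Basis (Fin 5) ℝ V) (g : LinearMap.BilinForm ℝ V)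
    (hb : ∀ i j, g (b i) (b j) = if i = j then (if i = 0 then -1 else 1) else 0)
    (i : Fin 5) (x : V) :
    g (b i) x = (if i = 0 then -1 else 1) * b.repr x i := by
  conv_lhs => rw [← b.sum_repr x]
  simp only [map_sum, map_smul, smul_eq_mul, hb]
  rw [Finset.sum_eq_single i (fun j _ hji => by rw [if_neg (Ne.symm hji), mul_zero])
    (fun h => absurd (Finset.mem_univ i) h)]
  rw [if_pos rfl]; ring

theorem eq_zero_of_repr_eq_zero (b : Basis (Fin 5) ℝ V) (x : V)
    (h : ∀ i, b.repr x i = 0) : x = 0 := by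
  have : b.repr x = 0 := Finsupp.ext h
  simpa using congrArg b.repr.symm this

theorem nondeg (b : Basis (Fin 5) ℝ V) (g : LinearMap.BilinForm ℝ V)
    (hb : ∀ i j, g (b i) (b j) = if i = j then (if i = 0 then -1 else 1) else 0)
    {x : V} (hx : x ≠ 0) : ∃ z, g z x ≠ 0 := by
  by_contra h
  push_neg at h
  refine hx (eq_zero_of_repr_eq_zero b x fun i => ?_)
  have := h (b i)
  rw [gcoord b g hb i x] at this
  by_cases hi : i = 0
  · rw [hi]; simp [hi] at this; linarith
  · simp [hi] at this; linarith

theorem null_prop (b : Basis (Fin 5) ℝ V) (g : LinearMap.BilinForm ℝ V)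
    (hb : ∀ i j, g (b i) (b j) = if i = j then (if i = 0 then -1 else 1) else 0)
    {x y : V} (hx : g x x = 0) (hy : g y y = 0) (hxy : g x y = 0) (hx0 : x ≠ 0) :
    ∃ c : ℝ, y = c • x := by
  set S := Finset.univ.erase (0 : Fin 5) with hS
  set X := fun i => b.repr x i with hX
  set Y := fun i => b.repr y i with hY
  have ex : ∑ i ∈ S, X i * X i = X 0 * X 0 := by
    have := gexp b g hb x x; rw [hx] at this; linarith
  have ey : ∑ i ∈ S, Y i * Y i = Y 0 * Y 0 := by
    have := gexp b g hb y y; rw [hy] at this; linarith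
  have exy : ∑ i ∈ S, X i * Y i = X 0 * Y 0 := by
    have := gexp b g hb x y; rw [hxy] at this; linarith
  have key : ∑ i ∈ S, (Y 0 * X i - X 0 * Y i)^2 = 0 := by
    have expand : ∀ i, (Y 0 * X i - X 0 * Y i)^2 =
        (Y 0 * Y 0) * (X i * X i) - (2 * (X 0 * Y 0)) * (X i * Y i)
          + (X 0 * X 0) * (Y i * Y i) := fun i => by ring
    rw [Finset.sum_congr rfl fun i _ => expand i]
    rw [Finset.sum_add_distrib, Finset.sum_sub_distrib, ← Finset.mul_sum, ← Finset.mul_sum,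
      ← Finset.mul_sum, ex, ey, exy]
    ring
  have heach : ∀ i ∈ S, Y 0 * X i - X 0 * Y i = 0 := by
    intro i hi
    have := (Finset.sum_eq_zero_iff_of_nonneg (fun j _ => sq_nonneg _)).mp key i hi
    exact pow_eq_zero_iff (n := 2) (by norm_num) |>.mp this
  have hall : ∀ i, Y 0 * X i = X 0 * Y i := by
    intro i
    by_cases hi : i = 0
    · rw [hi]; ring
    · have := heach i (Finset.mem_erase.mpr ⟨hi, Finset.mem_univ i⟩); linarith
  have hsm : Y 0 • x = X 0 • y := by
    apply b.repr.injective
    refine Finsupp.ext fun i => ?_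
    simp only [map_smul, Finsupp.smul_apply, smul_eq_mul]
    exact hall i
  by_cases hx0' : X 0 = 0
  · exfalso
    apply hx0
    apply eq_zero_of_repr_eq_zero b x
    intro i
    by_cases hi : i = 0
    · rw [hi]; exact hx0'
    · have hXi : X i * X i = 0 := by
        have hnn : ∀ j ∈ S, 0 ≤ X j * X j := fun j _ => mul_self_nonneg _
        have hx00 : ∑ i ∈ S, X i * X i = 0 := by rw [ex, hx0']; ring
        exact (Finset.sum_eq_zero_iff_of_nonneg hnn).mp hx00 i
          (Finset.mem_erase.mpr ⟨hi, Finset.mem_univ i⟩)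
      exact mul_self_eq_zero.mp hXi
  · refine ⟨Y 0 / X 0, ?_⟩
    have := congrArg (fun v => (X 0)⁻¹ • v) hsm
    simp only [smul_smul, inv_mul_cancel₀ hx0', one_smul] at this
    rw [← this, div_eq_inv_mul]

theorem timelike_perp (b : Basis (Fin 5) ℝ V) (g : LinearMap.BilinForm ℝ V)
    (hb : ∀ i j, g (b i) (b j) = if i = j then (if i = 0 then -1 else 1) else 0)
    {t x : V} (ht : g t t < 0) (htx : g t x = 0) : x = 0 ∨ 0 < g x x := by
  set S := Finset.univ.erase (0 : Fin 5) with hS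
  set T := fun i => b.repr t i
  set X := fun i => b.repr x i
  have et := gexp b g hb t t
  have ex := gexp b g hb x x
  have etx := gexp b g hb t x
  have cs := Finset.sum_mul_sq_le_sq_mul_sq S T X
  by_cases hgx : 0 < g x x
  · exact Or.inr hgx
  push_neg at hgx
  left
  have hX0 : X 0 = 0 := by
    by_contra hX0
    have h1 : ∑ i ∈ S, T i ^ 2 < T 0 ^ 2 := by
      have : ∑ i ∈ S, T i * T i = ∑ i ∈ S, T i ^ 2 := Finset.sum_congr rfl fun i _ => by ring
      rw [this] at et; nlinarith
    have h2 : ∑ i ∈ S, X i ^ 2 ≤ X 0 ^ 2 := by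
      have : ∑ i ∈ S, X i * X i = ∑ i ∈ S, X i ^ 2 := Finset.sum_congr rfl fun i _ => by ring
      rw [this] at ex; nlinarith
    have h3 : ∑ i ∈ S, T i * X i = T 0 * X 0 := by rw [etx] at htx; linarith
    have hTnn : (0:ℝ) ≤ ∑ i ∈ S, T i ^ 2 := Finset.sum_nonneg fun i _ => sq_nonneg _
    rw [h3] at cs
    have hX2 : 0 < X 0 ^ 2 := by positivity
    nlinarith [mul_le_mul_of_nonneg_left h2 hTnn, mul_lt_mul_of_pos_right h1 hX2,
      mul_pow (T 0) (X 0) 2]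
  apply eq_zero_of_repr_eq_zero b x
  intro i
  by_cases hi : i = 0
  · rw [hi]; exact hX0
  · have h2 : ∑ j ∈ S, X j * X j ≤ 0 := by rw [ex] at hgx; nlinarith [hX0]
    have : X i * X i = 0 := by
      have hnn : ∀ j ∈ S, 0 ≤ X j * X j := fun j _ => mul_self_nonneg _
      have := Finset.sum_nonneg hnn
      have hz : ∑ j ∈ S, X j * X j = 0 := le_antisymm h2 this
      exact (Finset.sum_eq_zero_iff_of_nonneg hnn).mp hz i
        (Finset.mem_erase.mpr ⟨hi, Finset.mem_univ i⟩)
    exact mul_self_eq_zero.mp this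

theorem null_perp (b : Basis (Fin 5) ℝ V) (g : LinearMap.BilinForm ℝ V)
    (hb : ∀ i j, g (b i) (b j) = if i = j then (if i = 0 then -1 else 1) else 0)
    {r x : V} (hr : g r r = 0) (hr0 : r ≠ 0) (hrx : g r x = 0) : 0 ≤ g x x := by
  set S := Finset.univ.erase (0 : Fin 5) with hS
  set R := fun i => b.repr r i
  set X := fun i => b.repr x i
  have er := gexp b g hb r r
  have ex := gexp b g hb x x
  have erx := gexp b g hb r x
  have cs := Finset.sum_mul_sq_le_sq_mul_sq S R X
  have h1 : ∑ i ∈ S, R i ^ 2 = R 0 ^ 2 := by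
    have : ∑ i ∈ S, R i * R i = ∑ i ∈ S, R i ^ 2 := Finset.sum_congr rfl fun i _ => by ring
    rw [this] at er; nlinarith
  have h3 : ∑ i ∈ S, R i * X i = R 0 * X 0 := by rw [erx] at hrx; linarith
  have hR0 : R 0 ≠ 0 := by
    intro h0
    apply hr0
    apply eq_zero_of_repr_eq_zero b r
    intro i
    by_cases hi : i = 0
    · rw [hi]; exact h0
    · have hz : ∑ j ∈ S, R j ^ 2 = 0 := by rw [h1, h0]; ring
      have := (Finset.sum_eq_zero_iff_of_nonneg (fun j _ => sq_nonneg (R j))).mp hz i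
        (Finset.mem_erase.mpr ⟨hi, Finset.mem_univ i⟩)
      exact pow_eq_zero_iff (n := 2) (by norm_num) |>.mp this
  rw [h3, h1] at cs
  have h4 : X 0 ^ 2 ≤ ∑ i ∈ S, X i ^ 2 := by
    have hR2 : 0 < R 0 ^ 2 := by positivity
    nlinarith
  have : ∑ i ∈ S, X i * X i = ∑ i ∈ S, X i ^ 2 := Finset.sum_congr rfl fun i _ => by ring
  rw [ex, this]; nlinarith

theorem exists_ker_aeval {W : Type*} [AddCommGroup W] [Module ℝ W] [FiniteDimensional ℝ W]
    (S : Module.End ℝ W) {p : ℝ[X]} (hp : 1 ≤ p.natDegree) (hdvd : p ∣ minpoly ℝ S) :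
    ∃ w : W, w ≠ 0 ∧ aeval S p w = 0 := by
  by_contra h
  push_neg at h
  have hker : ∀ w : W, aeval S p w = 0 → w = 0 := by
    intro w hw
    by_contra hw0
    exact h w hw0 hw
  obtain ⟨q₂, hq₂⟩ := hdvd
  have hint : IsIntegral ℝ S := LinearMap.isIntegral S
  have hq0 : minpoly ℝ S ≠ 0 := minpoly.ne_zero hint
  have haev : aeval S (minpoly ℝ S) = 0 := minpoly.aeval ℝ S
  have hzero : aeval S q₂ = 0 := by
    ext x
    rw [LinearMap.zero_apply]
    apply hker
    have h1 : (aeval S (minpoly ℝ S)) x = 0 := by rw [haev]; rfl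
    rw [hq₂, map_mul, Module.End.mul_apply] at h1
    exact h1
  have hdvd2 : minpoly ℝ S ∣ q₂ := minpoly.dvd ℝ S hzero
  have hq₂0 : q₂ ≠ 0 := fun h0 => hq0 (by rw [hq₂, h0, mul_zero])
  have hp0 : p ≠ 0 := fun h0 => by simp [h0] at hp
  have h1 := Polynomial.natDegree_le_of_dvd hdvd2 hq₂0
  have h2 : (minpoly ℝ S).natDegree = p.natDegree + q₂.natDegree := by
    rw [hq₂]; exact natDegree_mul hp0 hq₂0
  omega

theorem restrict_pow_coe (T : V →ₗ[ℝ] V) (W : Submodule ℝ V) (hW : ∀ x ∈ W, T x ∈ W)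
    (lam : ℝ) (k : ℕ) (x : W) :
    ((((T.restrict hW - lam • (1 : Module.End ℝ W)) ^ k) x : W) : V)
      = (((T - lam • LinearMap.id : Module.End ℝ V)) ^ k) (x : V) := by
  induction k with
  | zero => simp
  | succ n ih =>
    rw [pow_succ', pow_succ', Module.End.mul_apply, Module.End.mul_apply]
    have step : ∀ y : W, (((T.restrict hW - lam • (1 : Module.End ℝ W)) y : W) : V)
        = ((T - lam • LinearMap.id : Module.End ℝ V)) (y : V) := by
      intro y
      simp only [LinearMap.sub_apply, LinearMap.smul_apply, Module.End.one_apply,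
        LinearMap.id_apply, AddSubgroupClass.coe_sub, SetLike.val_smul]
      rw [LinearMap.restrict_apply]
    rw [step, ih]

theorem trichotomy (T : V →ₗ[ℝ] V) (W : Submodule ℝ V) (hW : ∀ x ∈ W, T x ∈ W)
    (hWne : W ≠ ⊥) (lam : ℝ) :
    (∃ w, w ∈ W ∧ w ≠ 0 ∧ ∃ μ : ℝ, μ ≠ lam ∧ T w = μ • w) ∨
    (∃ w, w ∈ W ∧ w ≠ 0 ∧ ∃ bb cc : ℝ, bb ^ 2 - 4 * cc < 0 ∧
      T (T w) + bb • T w + cc • w = 0) ∨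
    (∃ k : ℕ, 1 ≤ k ∧ ∀ x ∈ W, (((T - lam • LinearMap.id : Module.End ℝ V)) ^ k) x = 0) := by
  set S : Module.End ℝ W := T.restrict hW with hS
  haveI : Nontrivial W := Submodule.nontrivial_iff_ne_bot.mpr hWne
  have hint : IsIntegral ℝ S := LinearMap.isIntegral S
  set q : ℝ[X] := minpoly ℝ S with hq
  have hq0 : q ≠ 0 := minpoly.ne_zero hint
  have haev : aeval S q = 0 := minpoly.aeval ℝ S
  obtain ⟨q₁, hfact, hnd⟩ := q.exists_eq_pow_rootMultiplicity_mul_and_not_dvd hq0 lam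
  set m := q.rootMultiplicity lam with hm
  have hq₁0 : q₁ ≠ 0 := by
    intro h0; rw [h0, mul_zero] at hfact; exact hq0 hfact
  by_cases hq₁deg : q₁.natDegree = 0
  · -- q = (X - C lam)^m * C c
    right; right
    have hc : q₁ = C (q₁.coeff 0) := Polynomial.eq_C_of_natDegree_eq_zero hq₁deg
    have hc0 : q₁.coeff 0 ≠ 0 := by
      intro h0; rw [h0, C_0] at hc; exact hq₁0 hc
    have hm1 : 1 ≤ m := by
      by_contra hm0
      push_neg at hm0
      interval_cases m
      · rw [pow_zero, one_mul] at hfact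
        obtain ⟨w, hw⟩ := exists_ne (0 : W)
        have : aeval S q w = 0 := by rw [haev]; rfl
        rw [hfact, hc, aeval_C] at this
        have : (q₁.coeff 0) • w = 0 := by
          simpa [Algebra.algebraMap_eq_smul_one] using this
        rw [smul_eq_zero] at this
        tauto
    refine ⟨m, hm1, fun x hx => ?_⟩
    have key : ((S - lam • 1) ^ m) ⟨x, hx⟩ = 0 := by
      have h1 : aeval S q ⟨x, hx⟩ = 0 := by rw [haev]; rfl
      rw [hfact, hc, map_mul, map_pow, map_sub, aeval_X, aeval_C, aeval_C,
        Module.End.mul_apply] at h1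
      have h2 : (algebraMap ℝ (Module.End ℝ W)) (q₁.coeff 0) ⟨x, hx⟩
          = (q₁.coeff 0) • (⟨x, hx⟩ : W) := by
        rw [Module.algebraMap_end_eq_smul_id]; rfl
      rw [h2, map_smul] at h1
      have h3 : ((S - (algebraMap ℝ (Module.End ℝ W)) lam) ^ m) ⟨x, hx⟩ = 0 := by
        rcases smul_eq_zero.mp h1 with h | h
        · exact absurd h hc0
        · exact h
      rw [Module.algebraMap_end_eq_smul_id] at h3
      convert h3 using 4; rfl
    have := restrict_pow_coe T W hW lam m ⟨x, hx⟩
    rw [key] at this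
    simpa using this.symm
  · -- q₁ has an irreducible factor
    have hq₁u : ¬IsUnit q₁ := by
      intro hu
      rw [Polynomial.isUnit_iff] at hu
      obtain ⟨r, hr, hrq⟩ := hu
      rw [← hrq] at hq₁deg
      simp at hq₁deg
    obtain ⟨p, hpirr, hpdvd⟩ := WfDvdMonoid.exists_irreducible_factor hq₁u hq₁0
    have hpq : p ∣ q := hpdvd.trans ⟨(X - C lam) ^ m, by rw [hfact]; ring⟩
    have hpdeg2 : p.natDegree ≤ 2 := hpirr.natDegree_le_two
    have hpdeg1 : 1 ≤ p.natDegree := hpirr.natDegree_pos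
    obtain ⟨w, hw0, hker⟩ := exists_ker_aeval S hpdeg1 hpq
    have hcoe : ∀ y : W, ((S y : W) : V) = T (y : V) := fun y => rfl
    have hw0' : (w : V) ≠ 0 := fun h => hw0 (Subtype.coe_injective h)
    interval_cases hdeg : p.natDegree
    · -- degree 1
      left
      have hrep := Polynomial.eq_X_add_C_of_natDegree_le_one (le_of_eq hdeg)
      have ha : p.coeff 1 ≠ 0 := by
        intro h0
        rw [h0, C_0, zero_mul, zero_add] at hrep
        rw [hrep] at hdeg
        simp at hdeg
      set a := p.coeff 1
      set c₀ := p.coeff 0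
      have heval : a • S w + c₀ • w = 0 := by
        have := hker
        rw [hrep, map_add, map_mul, aeval_X, aeval_C, aeval_C] at this
        simpa [Module.algebraMap_end_eq_smul_id, LinearMap.add_apply, Module.End.mul_apply,
          LinearMap.smul_apply] using this
      set μ := -c₀ / a with hμ
      have hSw : S w = μ • w := by
        have : a • S w = (-c₀) • w := by
          rw [neg_smul]; rw [← sub_eq_zero]; rw [sub_neg_eq_add]; exact heval
        have := congrArg (fun z => a⁻¹ • z) this
        simpa [smul_smul, inv_mul_cancel₀ ha, hμ, div_eq_inv_mul, mul_comm] using this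
      refine ⟨(w : V), w.2, hw0', μ, ?_, ?_⟩
      · intro hμlam
        apply hnd
        have hμl : -c₀ / a = lam := by rw [← hμ, hμlam]
        have h2 : -c₀ = lam * a := by field_simp at hμl; linarith
        have hc₀l : c₀ = -(a * lam) := by linarith [h2]; 
        have hpc : p = C a * (X - C lam) := by
          rw [hrep, hc₀l, C_neg, C_mul]; ring
        exact (Dvd.intro (C a) (by rw [hpc]; ring)).trans hpdvd
      · have := congrArg (Subtype.val) hSw
        rw [hcoe] at this
        simpa using this
    · -- degree 2
      right; left
      have hrep : p = (C (p.coeff 2) * X + C (p.coeff 1)) * X + C (p.coeff 0) := by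
        conv_lhs => rw [← p.divX_mul_X_add]
        congr 2
        have hdx : p.divX.natDegree ≤ 1 := by
          rw [Polynomial.natDegree_divX_eq_natDegree_tsub_one, hdeg]
        rw [Polynomial.eq_X_add_C_of_natDegree_le_one hdx, Polynomial.coeff_divX,
          Polynomial.coeff_divX]
      set a := p.coeff 2
      set bb := p.coeff 1
      set c₀ := p.coeff 0
      have ha : a ≠ 0 := by
        intro h0
        have : p.natDegree ≤ 1 := by
          rw [hrep, h0, C_0, zero_mul, zero_add]
          calc (C bb * X + C c₀).natDegree ≤ max (C bb * X).natDegree (C c₀).natDegree :=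
                Polynomial.natDegree_add_le _ _
            _ ≤ 1 := by
                simp [Polynomial.natDegree_C]
                exact Polynomial.natDegree_C_mul_le _ _ |>.trans (by simp)
        omega
      have heval : a • S (S w) + bb • S w + c₀ • w = 0 := by
        have := hker
        rw [hrep, map_add, map_mul, map_add, map_mul, aeval_X, aeval_C, aeval_C, aeval_C] at this
        simpa [Module.algebraMap_end_eq_smul_id, LinearMap.add_apply, Module.End.mul_apply,
          LinearMap.smul_apply, smul_smul, add_smul] using this
      have hdisc : bb ^ 2 - 4 * (a * c₀) < 0 := by
        by_contra hge
        push_neg at hge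
        have hsq : discrim a bb c₀ = Real.sqrt (bb ^ 2 - 4 * (a * c₀)) *
            Real.sqrt (bb ^ 2 - 4 * (a * c₀)) := by
          rw [Real.mul_self_sqrt hge, discrim]; ring
        obtain ⟨x, hx⟩ := exists_quadratic_eq_zero ha ⟨_, hsq⟩
        have hroot : p.IsRoot x := by
          rw [Polynomial.IsRoot, hrep]
          simp only [eval_add, eval_mul, eval_X, eval_C]
          nlinarith [hx]
        obtain ⟨r, hr⟩ := Polynomial.dvd_iff_isRoot.mpr hroot
        have hr0 : r ≠ 0 := by
          intro h0; rw [h0, mul_zero] at hr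
          exact (Polynomial.ne_zero_of_natDegree_gt (n := 0) (by omega)) hr
        have := hpirr.isUnit_or_isUnit hr
        rcases this with h | h
        · exact (Polynomial.not_isUnit_of_natDegree_pos _ (by simp)) h
        · have : r.natDegree = 1 := by
            have := Polynomial.natDegree_mul (Polynomial.X_sub_C_ne_zero x) hr0
            rw [← hr, hdeg] at this
            simp [Polynomial.natDegree_X_sub_C] at this
            omega
          exact (Polynomial.not_isUnit_of_natDegree_pos r (by omega)) h
      refine ⟨(w : V), w.2, hw0', bb / a, c₀ / a, ?_, ?_⟩
      · have ha2 : 0 < a ^ 2 := by positivity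
        have heq : (bb/a)^2 - 4*(c₀/a) = (bb^2 - 4*(a*c₀))/a^2 := by
          field_simp
        rw [heq]
        exact div_neg_of_neg_of_pos hdisc ha2
      · have hV : a • T (T (w : V)) + bb • T (w : V) + c₀ • (w : V) = 0 := by
          have h0 := congrArg (Subtype.val) heval
          simp only [Submodule.coe_add, SetLike.val_smul, ZeroMemClass.coe_zero,
            hcoe] at h0
          exact h0
        have := congrArg (fun z => a⁻¹ • z) hV
        simp only [smul_add, smul_smul, smul_zero] at this
        rw [inv_mul_cancel₀ ha] at this
        simpa [div_eq_inv_mul, one_smul, mul_comm] using this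

theorem pow_mem_of_inv (T : V →ₗ[ℝ] V) (W : Submodule ℝ V) (hW : ∀ x ∈ W, T x ∈ W)
    (n : ℕ) : ∀ x ∈ W, (T ^ n) x ∈ W := by
  induction n with
  | zero => intro x hx; simpa using hx
  | succ n ih =>
    intro x hx
    rw [pow_succ', Module.End.mul_apply]
    exact hW _ (ih x hx)

theorem dichotomy (T : V →ₗ[ℝ] V) (W : Submodule ℝ V) (hW : ∀ x ∈ W, T x ∈ W)
    (hWne : W ≠ ⊥) :
    (∃ w, w ∈ W ∧ w ≠ 0 ∧ ∃ μ : ℝ, T w = μ • w) ∨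
    (∃ w, w ∈ W ∧ w ≠ 0 ∧ ∃ bb cc : ℝ, bb ^ 2 - 4 * cc < 0 ∧
      T (T w) + bb • T w + cc • w = 0) := by
  rcases trichotomy T W hW hWne 0 with ⟨w, hwW, hw0, μ, _, hTw⟩ | h | ⟨k, hk1, hk⟩
  · exact Or.inl ⟨w, hwW, hw0, μ, hTw⟩
  · exact Or.inr h
  · left
    have hnil : ∀ x ∈ W, (T ^ k) x = 0 := by
      intro x hx
      have := hk x hx
      simpa using this
    obtain ⟨w₀, hw₀W, hw₀0⟩ := Submodule.exists_mem_ne_zero_of_ne_bot hWne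
    have hPk : (T ^ k) w₀ = 0 := hnil w₀ hw₀W
    have hex : ∃ n, (T ^ n) w₀ = 0 := ⟨k, hPk⟩
    classical
    set j := Nat.find hex with hj
    have hjspec : (T ^ j) w₀ = 0 := Nat.find_spec hex
    have hj1 : 1 ≤ j := by
      rcases Nat.eq_zero_or_pos j with h0 | h1
      · exfalso; rw [h0] at hjspec; simp at hjspec; exact hw₀0 hjspec
      · exact h1
    refine ⟨(T ^ (j - 1)) w₀, pow_mem_of_inv T W hW _ w₀ hw₀W, ?_, 0, ?_⟩
    · exact Nat.find_min hex (by omega)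
    · have : (T ^ j) w₀ = T ((T ^ (j - 1)) w₀) := by
        conv_lhs => rw [show j = (j - 1) + 1 by omega]
        rw [pow_succ', Module.End.mul_apply]
      rw [this] at hjspec
      rw [hjspec, zero_smul]

theorem semidef_quad_contra (g : LinearMap.BilinForm ℝ V)
    (hsymm : ∀ u v : V, g u v = g v u) (T : V →ₗ[ℝ] V)
    (hsa : ∀ u v : V, g (T u) v = g u (T v)) {w : V} {bb cc : ℝ}
    (hd : bb ^ 2 - 4 * cc < 0) (hq : T (T w) + bb • T w + cc • w = 0)
    (hsemi : ∀ s t : ℝ, 0 ≤ g (s • w + t • T w) (s • w + t • T w))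
    (ha : 0 < g w w) : False := by
  set α := g w w with hα
  set β := g w (T w) with hβ
  set γ := g (T w) (T w) with hγdef
  have hTT : T (T w) = -(bb • T w) - cc • w := by
    rw [← sub_eq_zero, show T (T w) - (-(bb • T w) - cc • w)
      = T (T w) + bb • T w + cc • w from by abel]
    exact hq
  have hγ : γ = -(bb * β) - cc * α := by
    have h1 : g (T (T w)) w = γ := hsa (T w) w
    rw [hTT] at h1
    simp only [map_sub, map_neg, map_smul, LinearMap.sub_apply, LinearMap.neg_apply,
      LinearMap.smul_apply, smul_eq_mul] at h1
    rw [← h1, hsymm (T w) w]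
  have hCS : discrim γ (2 * β) α ≤ 0 := by
    apply discrim_le_zero
    intro x
    have := hsemi 1 x
    simp only [one_smul, map_add, map_smul, LinearMap.add_apply, LinearMap.smul_apply,
      smul_eq_mul] at this
    have hsy := hsymm (T w) w
    rw [hsy] at this
    rw [hα, hβ, hγdef]
    ring_nf at this ⊢
    linarith [this]
  rw [discrim] at hCS
  nlinarith [sq_nonneg (2 * β + bb * α), mul_pos ha ha, hCS, hγ, hd]

theorem posdef_eigen (g : LinearMap.BilinForm ℝ V)
    (hsymm : ∀ u v : V, g u v = g v u) (T : V →ₗ[ℝ] V)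
    (hsa : ∀ u v : V, g (T u) v = g u (T v)) (U : Submodule ℝ V)
    (hUinv : ∀ x ∈ U, T x ∈ U) (hUne : U ≠ ⊥)
    (hpos : ∀ x ∈ U, x ≠ 0 → 0 < g x x) :
    ∃ w, w ∈ U ∧ 0 < g w w ∧ ∃ μ : ℝ, T w = μ • w := by
  rcases dichotomy T U hUinv hUne with ⟨w, hwU, hw0, μ, hTw⟩ | ⟨w, hwU, hw0, bb, cc, hd, hq⟩
  · exact ⟨w, hwU, hpos w hwU hw0, μ, hTw⟩
  · exfalso
    apply semidef_quad_contra g hsymm T hsa hd hq _ (hpos w hwU hw0)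
    intro s t
    have hmem : s • w + t • T w ∈ U := U.add_mem (U.smul_mem s hwU) (U.smul_mem t (hUinv w hwU))
    by_cases h0 : s • w + t • T w = 0
    · rw [h0]; simp
    · exact le_of_lt (hpos _ hmem h0)

theorem finrank_inf_ker_ge (W : Submodule ℝ V) (f : V →ₗ[ℝ] ℝ) :
    finrank ℝ W ≤ finrank ℝ ↥(W ⊓ LinearMap.ker f) + 1 := by
  have h1 := LinearMap.finrank_range_add_finrank_ker (f.domRestrict W)
  have h2 : finrank ℝ ↥(LinearMap.ker (f.domRestrict W)) = finrank ℝ ↥(W ⊓ LinearMap.ker f) := by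
    rw [LinearMap.ker_domRestrict]
    rw [← Submodule.map_comap_subtype]
    rw [Submodule.finrank_map_subtype_eq]
  have h3 : finrank ℝ ↥(LinearMap.range (f.domRestrict W)) ≤ 1 := by
    have := Submodule.finrank_le (LinearMap.range (f.domRestrict W))
    simpa using this
  omega

theorem posdef_pair (g : LinearMap.BilinForm ℝ V)
    (hsymm : ∀ u v : V, g u v = g v u) (T : V →ₗ[ℝ] V)
    (hsa : ∀ u v : V, g (T u) v = g u (T v)) (U : Submodule ℝ V)
    (hUinv : ∀ x ∈ U, T x ∈ U) (hdim : 2 ≤ finrank ℝ U)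
    (hpos : ∀ x ∈ U, x ≠ 0 → 0 < g x x) :
    ∃ u v : V, ∃ lamu lamv : ℝ, T u = lamu • u ∧ T v = lamv • v ∧
      0 < g u u ∧ 0 < g v v ∧ g u v = 0 := by
  have hUne : U ≠ ⊥ := by
    intro h; rw [h] at hdim; simp [finrank_bot] at hdim
  obtain ⟨u, huU, hugg, μ, hTu⟩ := posdef_eigen g hsymm T hsa U hUinv hUne hpos
  set U₂ := U ⊓ LinearMap.ker (g u) with hU₂
  have hU₂inv : ∀ x ∈ U₂, T x ∈ U₂ := by
    intro x hx
    obtain ⟨hxU, hxk⟩ := Submodule.mem_inf.mp hx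
    refine Submodule.mem_inf.mpr ⟨hUinv x hxU, ?_⟩
    rw [LinearMap.mem_ker] at hxk ⊢
    have : g (T x) u = g x (T u) := hsa x u
    rw [hTu, map_smul, smul_eq_mul] at this
    rw [hsymm u (T x), this, ← hsymm u x]
    rw [hxk]; ring
  have hU₂ne : U₂ ≠ ⊥ := by
    intro h
    have := finrank_inf_ker_ge U (g u)
    rw [← hU₂, h] at this
    simp [finrank_bot] at this
    omega
  obtain ⟨v, hvU₂, hvgg, ν, hTv⟩ := posdef_eigen g hsymm T hsa U₂ hU₂inv hU₂ne
    (fun x hx hx0 => hpos x (Submodule.mem_inf.mp hx).1 hx0)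
  refine ⟨u, v, μ, ν, hTu, hTv, hugg, hvgg, ?_⟩
  exact (Submodule.mem_inf.mp hvU₂).2

theorem quad_timelike (b : Basis (Fin 5) ℝ V) (g : LinearMap.BilinForm ℝ V)
    (hb : ∀ i j, g (b i) (b j) = if i = j then (if i = 0 then -1 else 1) else 0)
    (hsymm : ∀ u v : V, g u v = g v u) (T : V →ₗ[ℝ] V)
    (hsa : ∀ u v : V, g (T u) v = g u (T v)) {w : V} {bb cc : ℝ}
    (hw0 : w ≠ 0) (hd : bb ^ 2 - 4 * cc < 0) (hq : T (T w) + bb • T w + cc • w = 0) :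
    ∃ t : V, g t t < 0 ∧ ∃ s₁ s₂ : ℝ, t = s₁ • w + s₂ • T w := by
  by_contra hcon
  push_neg at hcon
  have hsemi : ∀ s t : ℝ, 0 ≤ g (s • w + t • T w) (s • w + t • T w) := by
    intro s t
    by_contra hneg
    push_neg at hneg
    exact hcon (s • w + t • T w) hneg s t rfl
  have hα : 0 ≤ g w w := by
    have := hsemi 1 0
    simpa using this
  rcases lt_or_eq_of_le hα with hpos | hzero
  · exact semidef_quad_contra g hsymm T hsa hd hq hsemi hpos
  · -- g w w = 0
    have hww : g w w = 0 := hzero.symm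
    have hCS : discrim (g (T w) (T w)) (2 * g w (T w)) (g w w) ≤ 0 := by
      apply discrim_le_zero
      intro x
      have h5 := hsemi 1 x
      simp only [one_smul, map_add, map_smul, LinearMap.add_apply, LinearMap.smul_apply,
        smul_eq_mul] at h5
      rw [hsymm (T w) w] at h5
      ring_nf at h5 ⊢
      linarith [h5]
    have hγnn : 0 ≤ g (T w) (T w) := by
      have := hsemi 0 1
      simpa using this
    have hβ : g w (T w) = 0 := by
      rw [discrim, hww] at hCS
      nlinarith [hCS]
    have hγ : g (T w) (T w) = 0 := by
      have hTT : T (T w) = -(bb • T w) - cc • w := by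
        rw [← sub_eq_zero, show T (T w) - (-(bb • T w) - cc • w)
          = T (T w) + bb • T w + cc • w from by abel]
        exact hq
      have h1 : g (T (T w)) w = g (T w) (T w) := hsa (T w) w
      rw [hTT] at h1
      simp only [map_sub, map_neg, map_smul, LinearMap.sub_apply, LinearMap.neg_apply,
        LinearMap.smul_apply, smul_eq_mul] at h1
      rw [hsymm (T w) w] at h1
      rw [← h1, hβ, hww]; ring
    obtain ⟨c, hc⟩ := null_prop b g hb hww hγ hβ hw0
    have hTw : T w = c • w := hc
    have : (c * c + bb * c + cc) • w = 0 := by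
      rw [← hq, hTw, map_smul, hTw]
      module
    rcases smul_eq_zero.mp this with h | h
    · nlinarith [sq_nonneg (2 * c + bb), h]
    · exact hw0 h

theorem null_case (b : Basis (Fin 5) ℝ V) (g : LinearMap.BilinForm ℝ V)
    (hb : ∀ i j, g (b i) (b j) = if i = j then (if i = 0 then -1 else 1) else 0)
    (hsymm : ∀ u v : V, g u v = g v u) (T : V →ₗ[ℝ] V)
    (hsa : ∀ u v : V, g (T u) v = g u (T v)) {r : V} {lam : ℝ}
    (hr0 : r ≠ 0) (hrnull : g r r = 0) (hTr : T r = lam • r)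
    (W : Submodule ℝ V) (hWinv : ∀ x ∈ W, T x ∈ W)
    (hWperp : ∀ x ∈ W, g r x = 0) (hdim : 3 ≤ finrank ℝ W) :
    ∃ w, w ∈ W ∧ 0 < g w w ∧ ∃ μ : ℝ, T w = μ • w := by
  have hWne : W ≠ ⊥ := by
    intro h; rw [h] at hdim; simp [finrank_bot] at hdim
  have hsemiW : ∀ x ∈ W, 0 ≤ g x x := fun x hx =>
    null_perp b g hb hrnull hr0 (hWperp x hx)
  have hnullspan : ∀ x ∈ W, g x x = 0 → ∃ c : ℝ, x = c • r := by
    intro x hx hxx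
    exact null_prop b g hb hrnull hxx (hWperp x hx) hr0
  set N : Module.End ℝ V := T - lam • LinearMap.id with hN
  have hNapp : ∀ x : V, N x = T x - lam • x := fun x => rfl
  have hNr : N r = 0 := by rw [hNapp, hTr, sub_self]
  have hNsa : ∀ u v : V, g (N u) v = g u (N v) := by
    intro u v
    rw [hNapp, hNapp]
    simp only [map_sub, map_smul, LinearMap.sub_apply, LinearMap.smul_apply, smul_eq_mul]
    rw [hsa u v]
  have hNinv : ∀ x ∈ W, N x ∈ W := by
    intro x hx
    rw [hNapp]
    exact W.sub_mem (hWinv x hx) (W.smul_mem lam hx)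
  have hiter : ∀ (a : ℕ) (u v : V), g ((N ^ a) u) v = g u ((N ^ a) v) := by
    intro a
    induction a with
    | zero => intro u v; simp
    | succ n ih =>
      intro u v
      have h1 : (N ^ (n + 1)) u = (N ^ n) (N u) := by
        rw [pow_succ, Module.End.mul_apply]
      have h2 : (N ^ (n + 1)) v = N ((N ^ n) v) := by
        rw [pow_succ', Module.End.mul_apply]
      rw [h1, h2, ih (N u) v, hNsa]
  have hNpowr : ∀ t : ℕ, 1 ≤ t → (N ^ t) r = 0 := by
    intro t ht
    rw [show t = (t - 1) + 1 by omega, pow_succ, Module.End.mul_apply, hNr, map_zero]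
  rcases trichotomy T W hWinv hWne lam with ⟨w, hwW, hw0, μ, hμlam, hTw⟩ |
    ⟨w, hwW, hw0, bb, cc, hd, hq⟩ | ⟨k, hk1, hk⟩
  · -- eigenvector with eigenvalue ≠ lam
    refine ⟨w, hwW, ?_, μ, hTw⟩
    rcases lt_or_eq_of_le (hsemiW w hwW) with h | h
    · exact h
    · exfalso
      obtain ⟨c, hc⟩ := hnullspan w hwW h.symm
      have : T w = lam • w := by rw [hc, map_smul, hTr, smul_smul, smul_smul, mul_comm]
      rw [hTw] at this
      have : (μ - lam) • w = 0 := by rw [sub_smul, this, sub_self]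
      rcases smul_eq_zero.mp this with h' | h'
      · exact hμlam (by linarith [sub_eq_zero.mp h'])
      · exact hw0 h'
  · -- quadratic: impossible
    exfalso
    have hsemi : ∀ s t : ℝ, 0 ≤ g (s • w + t • T w) (s • w + t • T w) := by
      intro s t
      exact hsemiW _ (W.add_mem (W.smul_mem s hwW) (W.smul_mem t (hWinv w hwW)))
    rcases lt_or_eq_of_le (hsemiW w hwW) with h | h
    · exact semidef_quad_contra g hsymm T hsa hd hq hsemi h
    · obtain ⟨c, hc⟩ := hnullspan w hwW h.symm
      have hTw : T w = lam • w := by rw [hc, map_smul, hTr, smul_smul, smul_smul, mul_comm]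
      have : (lam * lam + bb * lam + cc) • w = 0 := by
        rw [← hq, hTw, map_smul, hTw]
        module
      rcases smul_eq_zero.mp this with h' | h'
      · nlinarith [sq_nonneg (2 * lam + bb), h']
      · exact hw0 h'
  · -- nilpotent case
    have hP1 : ∀ x ∈ W, ∃ c : ℝ, N x = c • r := by
      have key : ∀ j : ℕ, 1 ≤ j → (∀ x ∈ W, ∃ c : ℝ, (N ^ j) x = c • r) →
          (∀ x ∈ W, ∃ c : ℝ, N x = c • r) := by
        intro j
        induction j using Nat.strong_induction_on with
        | _ j ih =>
          intro hj1 hPj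
          rcases eq_or_lt_of_le hj1 with h1 | h2
          · intro x hx
            obtain ⟨c, hc⟩ := hPj x hx
            exact ⟨c, by rw [← h1, pow_one] at hc; exact hc⟩
          · -- j ≥ 2
            apply ih (j - 1) (by omega) (by omega)
            intro x hx
            set y := (N ^ (j - 1)) x with hy
            have hyW : y ∈ W := pow_mem_of_inv N W hNinv (j - 1) x hx
            have hyy : g y y = 0 := by
              have h3 : g y y = g x ((N ^ ((j - 1) + (j - 1))) x) := by
                rw [hy, hiter (j - 1) x]
                rw [← Module.End.mul_apply, ← pow_add]
              have h4 : (j - 1) + (j - 1) = (j - 2) + j := by omega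
              obtain ⟨c, hc⟩ := hPj x hx
              have h5 : (N ^ ((j - 1) + (j - 1))) x = (N ^ (j - 2)) (c • r) := by
                rw [h4, pow_add, Module.End.mul_apply, hc]
              rw [h3, h5, map_smul]
              rcases Nat.eq_zero_or_pos (j - 2) with h6 | h6
              · rw [h6, pow_zero]
                simp only [Module.End.one_apply, map_smul, smul_eq_mul]
                rw [hsymm x r, hWperp x hx, mul_zero]
              · rw [hNpowr (j - 2) h6]
                simp
            exact hnullspan y hyW hyy
      apply key k hk1
      intro x hx
      exact ⟨0, by rw [hk x hx, zero_smul]⟩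
    obtain ⟨z, hz⟩ := nondeg b g hb hr0
    set f : V →ₗ[ℝ] ℝ := (g z).comp (N : V →ₗ[ℝ] V) with hf
    set A := W ⊓ LinearMap.ker f with hA
    have hAdim : 2 ≤ finrank ℝ A := by
      have := finrank_inf_ker_ge W f
      rw [hA]
      omega
    have hrspan : finrank ℝ (Submodule.span ℝ {r}) ≤ 1 := by
      have := finrank_span_singleton (K := ℝ) hr0
      omega
    have hAnotle : ¬(A ≤ Submodule.span ℝ {r}) := by
      intro hle
      have := Submodule.finrank_mono hle
      omega
    obtain ⟨x, hxA, hxr⟩ := SetLike.not_le_iff_exists.mp hAnotle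
    obtain ⟨hxW, hxk⟩ := Submodule.mem_inf.mp hxA
    obtain ⟨c, hc⟩ := hP1 x hxW
    have hc0 : c = 0 := by
      rw [LinearMap.mem_ker, hf, LinearMap.comp_apply] at hxk
      rw [hc, map_smul, smul_eq_mul] at hxk
      rcases mul_eq_zero.mp hxk with h | h
      · exact h
      · exact absurd h hz
    have hNx : N x = 0 := by rw [hc, hc0, zero_smul]
    have hTx : T x = lam • x := by
      have := hNapp x
      rw [hNx] at this
      linear_combination (norm := module) -this
    refine ⟨x, hxW, ?_, lam, hTx⟩
    rcases lt_or_eq_of_le (hsemiW x hxW) with h | h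
    · exact h
    · exfalso
      obtain ⟨c', hc'⟩ := hnullspan x hxW h.symm
      exact hxr (by rw [hc']; exact Submodule.smul_mem _ _ (Submodule.mem_span_singleton_self r))

theorem pair_package (g : LinearMap.BilinForm ℝ V)
    (hsymm : ∀ u v : V, g u v = g v u) (T : V →ₗ[ℝ] V)
    {u v : V} {lamu lamv : ℝ} (hTu : T u = lamu • u) (hTv : T v = lamv • v)
    (hu : 0 < g u u) (hv : 0 < g v v) (huv : g u v = 0) :
    ∃ (u' v' : V) (lamu' lamv' : ℝ), LinearIndependent ℝ ![u', v'] ∧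
      T u' = lamu' • u' ∧ T v' = lamv' • v' ∧
      0 < g u' u' ∧ 0 < g v' v' ∧ g u' v' = 0 := by
  refine ⟨u, v, lamu, lamv, ?_, hTu, hTv, hu, hv, huv⟩
  rw [LinearIndependent.pair_iff]
  intro s t hst
  have h1 : g u (s • u + t • v) = s * g u u := by
    simp only [map_add, map_smul, smul_eq_mul, huv]
    ring
  have h2 : g v (s • u + t • v) = t * g v v := by
    simp only [map_add, map_smul, smul_eq_mul]
    rw [hsymm v u, huv]
    ring
  rw [hst, map_zero] at h1 h2
  constructor
  · rcases mul_eq_zero.mp h1.symm with h | h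
    · exact h
    · linarith
  · rcases mul_eq_zero.mp h2.symm with h | h
    · exact h
    · linarith

end Aux

set_option maxHeartbeats 1000000 in
theorem stmt_3 {V : Type*} [AddCommGroup V] [Module ℝ V] [FiniteDimensional ℝ V]
    (hdim : finrank ℝ V = 5)
    (g : LinearMap.BilinForm ℝ V)
    (hsymm : ∀ u v : V, g u v = g v u)
    (hsig : ∃ b : Basis (Fin 5) ℝ V, ∀ i j, g (b i) (b j) =
      if i = j then (if i = 0 then -1 else 1) else 0)
    (T : V →ₗ[ℝ] V)
    (hsa : ∀ u v : V, g (T u) v = g u (T v)) :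
    ∃ (u v : V) (lamu lamv : ℝ), LinearIndependent ℝ ![u, v] ∧
      T u = lamu • u ∧ T v = lamv • v ∧
      0 < g u u ∧ 0 < g v v ∧ g u v = 0 := by
  obtain ⟨b, hb⟩ := hsig
  have htop : finrank ℝ (⊤ : Submodule ℝ V) = 5 := by rw [finrank_top]; exact hdim
  have htopne : (⊤ : Submodule ℝ V) ≠ ⊥ := by
    intro h
    rw [h, finrank_bot] at htop
    omega
  -- helper : finish from a positive-definite invariant subspace of dim ≥ 2
  have finish : ∀ (U : Submodule ℝ V), (∀ x ∈ U, T x ∈ U) → 2 ≤ finrank ℝ U →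
      (∀ x ∈ U, x ≠ 0 → 0 < g x x) →
      ∃ (u v : V) (lamu lamv : ℝ), LinearIndependent ℝ ![u, v] ∧
        T u = lamu • u ∧ T v = lamv • v ∧
        0 < g u u ∧ 0 < g v v ∧ g u v = 0 := by
    intro U hUinv hUdim hUpos
    obtain ⟨u, v, lamu, lamv, hTu, hTv, hu, hv, huv⟩ :=
      posdef_pair g hsymm T hsa U hUinv hUdim hUpos
    exact pair_package g hsymm T hTu hTv hu hv huv
  -- helper : eigenvector kernel invariance
  have ker_eig : ∀ (v : V) (lam : ℝ), T v = lam • v → ∀ x, g v x = 0 → g v (T x) = 0 := by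
    intro v lam hTv x hx
    rw [hsymm v (T x), hsa x v, hTv, map_smul, smul_eq_mul, ← hsymm v x, hx, mul_zero]
  -- helper : quadratic kernel invariance
  have ker_quad : ∀ (w : V) (bb cc : ℝ), T (T w) + bb • T w + cc • w = 0 →
      ∀ x, g w x = 0 → g (T w) x = 0 → g w (T x) = 0 ∧ g (T w) (T x) = 0 := by
    intro w bb cc hq x hwx hTwx
    have hTT : T (T w) = -(bb • T w) - cc • w := by
      rw [← sub_eq_zero, show T (T w) - (-(bb • T w) - cc • w)
        = T (T w) + bb • T w + cc • w from by abel]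
      exact hq
    constructor
    · rw [hsymm w (T x), hsa x w, ← hsymm (T w) x, hTwx]
    · rw [hsymm (T w) (T x), hsa x (T w), hTT]
      simp only [map_sub, map_neg, map_smul, smul_eq_mul]
      rw [← hsymm (T w) x, hTwx, ← hsymm w x, hwx]
      ring
  -- dimension helpers
  have dim1 : ∀ f : V →ₗ[ℝ] ℝ, 4 ≤ finrank ℝ ↥(⊤ ⊓ LinearMap.ker f) := by
    intro f
    have := finrank_inf_ker_ge (⊤ : Submodule ℝ V) f
    omega
  have dim2 : ∀ (f₁ f₂ : V →ₗ[ℝ] ℝ),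
      3 ≤ finrank ℝ ↥((⊤ ⊓ LinearMap.ker f₁) ⊓ LinearMap.ker f₂) := by
    intro f₁ f₂
    have h1 := dim1 f₁
    have := finrank_inf_ker_ge (⊤ ⊓ LinearMap.ker f₁) f₂
    omega
  have dim3 : ∀ (f₁ f₂ f₃ : V →ₗ[ℝ] ℝ),
      2 ≤ finrank ℝ ↥(((⊤ ⊓ LinearMap.ker f₁) ⊓ LinearMap.ker f₂) ⊓ LinearMap.ker f₃) := by
    intro f₁ f₂ f₃
    have h1 := dim2 f₁ f₂
    have := finrank_inf_ker_ge ((⊤ ⊓ LinearMap.ker f₁) ⊓ LinearMap.ker f₂) f₃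
    omega
  have nebot : ∀ (U : Submodule ℝ V), 1 ≤ finrank ℝ U → U ≠ ⊥ := by
    intro U h1 hbot
    rw [hbot, finrank_bot] at h1
    omega
  -- timelike finish
  have timelike_finish : ∀ (t : V), g t t < 0 → ∀ (U : Submodule ℝ V),
      (∀ x ∈ U, T x ∈ U) → (∀ x ∈ U, g t x = 0) → 2 ≤ finrank ℝ U →
      ∃ (u v : V) (lamu lamv : ℝ), LinearIndependent ℝ ![u, v] ∧
        T u = lamu • u ∧ T v = lamv • v ∧
        0 < g u u ∧ 0 < g v v ∧ g u v = 0 := by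
    intro t htt U hUinv hUperp hUdim
    apply finish U hUinv hUdim
    intro x hx hx0
    rcases timelike_perp b g hb htt (hUperp x hx) with h | h
    · exact absurd h hx0
    · exact h
  -- quadratic finish
  have quad_finish : ∀ (w : V) (bb cc : ℝ), w ≠ 0 → bb ^ 2 - 4 * cc < 0 →
      T (T w) + bb • T w + cc • w = 0 →
      ∀ (U : Submodule ℝ V), (∀ x ∈ U, T x ∈ U) →
      (∀ x ∈ U, g w x = 0 ∧ g (T w) x = 0) → 2 ≤ finrank ℝ U →
      ∃ (u v : V) (lamu lamv : ℝ), LinearIndependent ℝ ![u, v] ∧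
        T u = lamu • u ∧ T v = lamv • v ∧
        0 < g u u ∧ 0 < g v v ∧ g u v = 0 := by
    intro w bb cc hw0 hd hq U hUinv hUperp hUdim
    obtain ⟨t, htt, s₁, s₂, hts⟩ := quad_timelike b g hb hsymm T hsa hw0 hd hq
    apply timelike_finish t htt U hUinv _ hUdim
    intro x hx
    rw [hts]
    simp only [map_add, map_smul, LinearMap.add_apply, LinearMap.smul_apply, smul_eq_mul]
    rw [(hUperp x hx).1, (hUperp x hx).2]
    ring
  rcases dichotomy T ⊤ (fun x _ => Submodule.mem_top) htopne with
    ⟨u, -, hu0, lam, hTu⟩ | ⟨w, -, hw0, bb, cc, hd, hq⟩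
  · -- top-level eigenvector
    rcases lt_trichotomy (g u u) 0 with hneg | hzero | hpos
    · -- timelike eigenvector
      refine timelike_finish u hneg (⊤ ⊓ LinearMap.ker (g u)) ?_ ?_ (by have := dim1 (g u); omega)
      · intro x hx
        obtain ⟨-, hk⟩ := Submodule.mem_inf.mp hx
        refine Submodule.mem_inf.mpr ⟨Submodule.mem_top, LinearMap.mem_ker.mpr ?_⟩
        exact ker_eig u lam hTu x (LinearMap.mem_ker.mp hk)
      · intro x hx
        exact LinearMap.mem_ker.mp (Submodule.mem_inf.mp hx).2
    · -- null eigenvector at top level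
      set W' := ⊤ ⊓ LinearMap.ker (g u) with hW'
      have hW'inv : ∀ x ∈ W', T x ∈ W' := by
        intro x hx
        obtain ⟨-, hk⟩ := Submodule.mem_inf.mp hx
        exact Submodule.mem_inf.mpr ⟨Submodule.mem_top,
          LinearMap.mem_ker.mpr (ker_eig u lam hTu x (LinearMap.mem_ker.mp hk))⟩
      have hW'perp : ∀ x ∈ W', g u x = 0 := fun x hx =>
        LinearMap.mem_ker.mp (Submodule.mem_inf.mp hx).2
      obtain ⟨w₁, hw₁W, hw₁g, μ₁, hTw₁⟩ := null_case b g hb hsymm T hsa hu0 hzero hTu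
        W' hW'inv hW'perp (by rw [hW']; have := dim1 (g u); omega)
      set W'' := (⊤ ⊓ LinearMap.ker (g u)) ⊓ LinearMap.ker (g w₁) with hW''
      have hW''inv : ∀ x ∈ W'', T x ∈ W'' := by
        intro x hx
        obtain ⟨h1, hk2⟩ := Submodule.mem_inf.mp hx
        obtain ⟨-, hk1⟩ := Submodule.mem_inf.mp h1
        refine Submodule.mem_inf.mpr ⟨Submodule.mem_inf.mpr ⟨Submodule.mem_top,
          LinearMap.mem_ker.mpr (ker_eig u lam hTu x (LinearMap.mem_ker.mp hk1))⟩,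
          LinearMap.mem_ker.mpr (ker_eig w₁ μ₁ hTw₁ x (LinearMap.mem_ker.mp hk2))⟩
      have hW''perp : ∀ x ∈ W'', g u x = 0 := fun x hx =>
        LinearMap.mem_ker.mp (Submodule.mem_inf.mp (Submodule.mem_inf.mp hx).1).2
      obtain ⟨w₂, hw₂W, hw₂g, μ₂, hTw₂⟩ := null_case b g hb hsymm T hsa hu0 hzero hTu
        W'' hW''inv hW''perp (dim2 (g u) (g w₁))
      have horth : g w₁ w₂ = 0 :=
        LinearMap.mem_ker.mp (Submodule.mem_inf.mp hw₂W).2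
      exact pair_package g hsymm T hTw₁ hTw₂ hw₁g hw₂g horth
    · -- spacelike eigenvector u
      set W₁ := ⊤ ⊓ LinearMap.ker (g u) with hW₁
      have hW₁inv : ∀ x ∈ W₁, T x ∈ W₁ := by
        intro x hx
        obtain ⟨-, hk⟩ := Submodule.mem_inf.mp hx
        exact Submodule.mem_inf.mpr ⟨Submodule.mem_top,
          LinearMap.mem_ker.mpr (ker_eig u lam hTu x (LinearMap.mem_ker.mp hk))⟩
      have hW₁ne : W₁ ≠ ⊥ := nebot W₁ (by rw [hW₁]; have := dim1 (g u); omega)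
      rcases dichotomy T W₁ hW₁inv hW₁ne with
        ⟨u₂, hu₂W, hu₂0, μ, hTu₂⟩ | ⟨w, hwW, hw0, bb, cc, hd, hq⟩
      · -- eigenvector in u-perp
        have horth : g u u₂ = 0 := LinearMap.mem_ker.mp (Submodule.mem_inf.mp hu₂W).2
        rcases lt_trichotomy (g u₂ u₂) 0 with hneg2 | hzero2 | hpos2
        · refine timelike_finish u₂ hneg2 (⊤ ⊓ LinearMap.ker (g u₂)) ?_ ?_
            (by have := dim1 (g u₂); omega)
          · intro x hx
            obtain ⟨-, hk⟩ := Submodule.mem_inf.mp hx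
            exact Submodule.mem_inf.mpr ⟨Submodule.mem_top,
              LinearMap.mem_ker.mpr (ker_eig u₂ μ hTu₂ x (LinearMap.mem_ker.mp hk))⟩
          · intro x hx
            exact LinearMap.mem_ker.mp (Submodule.mem_inf.mp hx).2
        · -- null eigenvector orth to spacelike u
          set W'' := (⊤ ⊓ LinearMap.ker (g u₂)) ⊓ LinearMap.ker (g u) with hW''
          have hW''inv : ∀ x ∈ W'', T x ∈ W'' := by
            intro x hx
            obtain ⟨h1, hk2⟩ := Submodule.mem_inf.mp hx
            obtain ⟨-, hk1⟩ := Submodule.mem_inf.mp h1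
            refine Submodule.mem_inf.mpr ⟨Submodule.mem_inf.mpr ⟨Submodule.mem_top,
              LinearMap.mem_ker.mpr (ker_eig u₂ μ hTu₂ x (LinearMap.mem_ker.mp hk1))⟩,
              LinearMap.mem_ker.mpr (ker_eig u lam hTu x (LinearMap.mem_ker.mp hk2))⟩
          have hW''perp : ∀ x ∈ W'', g u₂ x = 0 := fun x hx =>
            LinearMap.mem_ker.mp (Submodule.mem_inf.mp (Submodule.mem_inf.mp hx).1).2
          obtain ⟨w₂, hw₂W, hw₂g, μ₂, hTw₂⟩ := null_case b g hb hsymm T hsa hu₂0 hzero2 hTu₂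
            W'' hW''inv hW''perp (dim2 (g u₂) (g u))
          have horth2 : g u w₂ = 0 :=
            LinearMap.mem_ker.mp (Submodule.mem_inf.mp hw₂W).2
          exact pair_package g hsymm T hTu hTw₂ hpos hw₂g horth2
        · exact pair_package g hsymm T hTu hTu₂ hpos hpos2 horth
      · -- quadratic in u-perp
        refine quad_finish w bb cc hw0 hd hq
          (((⊤ ⊓ LinearMap.ker (g u)) ⊓ LinearMap.ker (g w)) ⊓ LinearMap.ker (g (T w)))
          ?_ ?_ (dim3 (g u) (g w) (g (T w)))
        · intro x hx
          obtain ⟨h1, hk3⟩ := Submodule.mem_inf.mp hx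
          obtain ⟨h2, hk2⟩ := Submodule.mem_inf.mp h1
          obtain ⟨-, hk1⟩ := Submodule.mem_inf.mp h2
          obtain ⟨hq1, hq2⟩ := ker_quad w bb cc hq x
            (LinearMap.mem_ker.mp hk2) (LinearMap.mem_ker.mp hk3)
          refine Submodule.mem_inf.mpr ⟨Submodule.mem_inf.mpr ⟨Submodule.mem_inf.mpr
            ⟨Submodule.mem_top, LinearMap.mem_ker.mpr
              (ker_eig u lam hTu x (LinearMap.mem_ker.mp hk1))⟩,
            LinearMap.mem_ker.mpr hq1⟩, LinearMap.mem_ker.mpr hq2⟩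
        · intro x hx
          obtain ⟨h1, hk3⟩ := Submodule.mem_inf.mp hx
          obtain ⟨h2, hk2⟩ := Submodule.mem_inf.mp h1
          exact ⟨LinearMap.mem_ker.mp hk2, LinearMap.mem_ker.mp hk3⟩
  · -- top-level quadratic
    refine quad_finish w bb cc hw0 hd hq
      ((⊤ ⊓ LinearMap.ker (g w)) ⊓ LinearMap.ker (g (T w))) ?_ ?_
      (by have := dim2 (g w) (g (T w)); omega)
    · intro x hx
      obtain ⟨h1, hk2⟩ := Submodule.mem_inf.mp hx
      obtain ⟨-, hk1⟩ := Submodule.mem_inf.mp h1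
      obtain ⟨hq1, hq2⟩ := ker_quad w bb cc hq x
        (LinearMap.mem_ker.mp hk1) (LinearMap.mem_ker.mp hk2)
      exact Submodule.mem_inf.mpr ⟨Submodule.mem_inf.mpr ⟨Submodule.mem_top,
        LinearMap.mem_ker.mpr hq1⟩, LinearMap.mem_ker.mpr hq2⟩
    · intro x hx
      obtain ⟨h1, hk2⟩ := Submodule.mem_inf.mp hx
      obtain ⟨-, hk1⟩ := Submodule.mem_inf.mp h1
      exact ⟨LinearMap.mem_ker.mp hk1, LinearMap.mem_ker.mp hk2⟩
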